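/- In the temporal graph G constructed from a static graph G_I = (V_I, E_I) with |V_I| = n (as in the reduction from Maximum Independent Set), each temporal path p(V_i), for 1 ≤ i ≤ n+1, is colorful. -/

import Mathlib

/-- Colors of the reduction: `a i q` is the color `a_i^q` and `col i j` is the
color `c_{i,j}`; all these colors are pairwise distinct. -/
inductive Color where
  | a : ℕ → ℕ → Color
  | col : ℕ → ℕ → Color
deriving DecidableEq

/-- The coloring of vertex `v_{i,x}` in the reduction from `Max IS`
(adjacency given by `Adj` on vertices `1, …, n`). -/
def reductionColor (n : ℕ) (Adj : ℕ → ℕ → Bool) (i x : ℕ) : Color :=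
  if i = n + 1 then Color.a (n + 1) x
  else if x = 0 then Color.a i 0
  else if Adj i x then Color.col (min i x) (max i x)
  else Color.a i x

/-! Each color of the path `p(V_i)` determines its vertex: the `a`-colors `a_i^x` carry `x`
directly, and the edge color `c_{min(i,x), max(i,x)}` determines the endpoint `x` of the edge
`{v_i, v_x}` once `i` is known. -/

theorem eq_of_min_eq_of_max_eq {α : Type*} [LinearOrder α] {a x y : α}
    (hmin : min a x = min a y) (hmax : max a x = max a y) : x = y := by
  rcases le_total a x with hx | hx <;> rcases le_total a y with hy | hy <;> grind

theorem reductionColor_injective (n : ℕ) (Adj : ℕ → ℕ → Bool) (i : ℕ) :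
    Function.Injective (reductionColor n Adj i) := by
  intro x y h
  unfold reductionColor at h
  split_ifs at h <;> simp only [Color.a.injEq, Color.col.injEq, true_and] at h <;>
    first
    | exact eq_of_min_eq_of_max_eq h.1 h.2
    | omega

theorem pVi_colorful_general (n : ℕ) (Adj : ℕ → ℕ → Bool)
    (i : ℕ) :
    ((List.range (n + 1)).map (reductionColor n Adj i)).Nodup :=
  List.nodup_range.map (reductionColor_injective n Adj i)

/-- Each temporal path `p(V_i)`, `1 ≤ i ≤ n+1`, is colorful: the colors of its
vertices `v_{i,0}, …, v_{i,n}` are pairwise distinct. -/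
theorem pVi_colorful (n : ℕ) (Adj : ℕ → ℕ → Bool)
    (hsym : ∀ i j, Adj i j = Adj j i) (hirr : ∀ i, Adj i i = false)
    (i : ℕ) (hi1 : 1 ≤ i) (hi2 : i ≤ n + 1) :
    ((List.range (n + 1)).map (reductionColor n Adj i)).Nodup :=
  pVi_colorful_general n Adj i
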